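/- (Generalization error bound for heterogeneous quantile regression, Lemma A.6.) For any κ > 0, under (C.0), σ_R²(n) := sup_{θ∈Θ} (1/n) Σ E[ρ_τ²(Y_i − X_i⊤θ)] < ∞ and E‖X‖₂² < ∞, for every δ ∈ (0,1) and α > 0, the following holds with probability at least 1 − δ: R^n_{ρ_τ}(θ̂_n) − R̂_{ψ,ρ_τ,α}(θ̂_n) ≤ 2κ·l_τ·E‖X‖₂ + α·sup_{θ∈Θ} R^n_{ρ_τ²}(θ) + α·(κ·l_τ)²·E‖X‖₂² + (1/(nα))·log(N(Θ,κ)/δ). -/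

import Mathlib

open MeasureTheory ProbabilityTheory Real
open scoped BigOperators ENNReal RealInnerProductSpace

/-!
Cover `Θ` by `N` closed balls of radius `κ`. Since `θ ↦ ρ_τ(Y - ⟪X, θ⟫)` is `l ‖X‖`-Lipschitz,
the loss at a net point `y` shifted down by `l κ ‖X‖` is a lower envelope of the losses on the ball
around `y`; it lies below the loss at any `θ` of the ball by at most `2 l κ ‖X‖`, and its second
moment exceeds that of the loss at `θ` by at most `(l κ)² E‖X‖²`. Catoni's bound
`exp (-ψ x) ≤ 1 - x + x² / 2`, independence and Chernoff's inequality show that the truncated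
empirical risk of an envelope falls below its mean minus `α / 2` times its second moment and
`log (N / δ) / (n α)` with probability at most `δ / N`. Off the union of these `N` events,
monotonicity of `ψ` transfers the bound from the net point next to `θ̂` to `θ̂` itself.
-/

/-- The quantile (check) loss `ρ_τ(u) = u(τ − 1(u<0))`. -/
noncomputable def quantileLoss (τ u : ℝ) : ℝ := u * (τ - if u < 0 then 1 else 0)

/-- `N` is the covering number of `Θ` by closed balls of radius `κ`. -/
def IsCoveringNumber {E : Type*} [PseudoMetricSpace E] (Θ : Set E) (κ : ℝ) (N : ℕ) : Prop :=
  (∃ s : Finset E, s.card = N ∧ Θ ⊆ ⋃ y ∈ s, Metric.closedBall y κ) ∧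
  ∀ m : ℕ, (∃ s : Finset E, s.card = m ∧ Θ ⊆ ⋃ y ∈ s, Metric.closedBall y κ) → N ≤ m

lemma quantileLoss_eq_mul_add_max (τ u : ℝ) : quantileLoss τ u = τ * u + max (-u) 0 := by
  unfold quantileLoss
  split_ifs with h
  · rw [max_eq_left (by linarith)]; ring
  · rw [max_eq_right (by linarith)]; ring

lemma quantileLoss_nonneg {τ : ℝ} (hτ : τ ∈ Set.Icc (0 : ℝ) 1) (u : ℝ) :
    0 ≤ quantileLoss τ u := by
  unfold quantileLoss
  split_ifs with h <;> nlinarith [hτ.1, hτ.2]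

lemma continuous_quantileLoss (τ : ℝ) : Continuous (quantileLoss τ) := by
  simp only [funext (quantileLoss_eq_mul_add_max τ)]
  fun_prop

lemma abs_quantileLoss_sub_le {τ : ℝ} (hτ : 0 ≤ τ) (u v : ℝ) :
    |quantileLoss τ u - quantileLoss τ v| ≤ (1 + τ) * |u - v| := by
  simp only [quantileLoss_eq_mul_add_max]
  calc |τ * u + max (-u) 0 - (τ * v + max (-v) 0)|
      = |τ * (u - v) + (max (-u) 0 - max (-v) 0)| := by congr 1; ring
    _ ≤ τ * |u - v| + |-u - -v| := by
      grw [abs_add_le, abs_mul, abs_of_nonneg hτ, abs_max_sub_max_le_abs]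
    _ = (1 + τ) * |u - v| := by rw [neg_sub_neg, abs_sub_comm]; ring

section Catoni

variable {Ω : Type*} [MeasurableSpace Ω] {μ : Measure Ω} {ψ : ℝ → ℝ}

lemma exp_neg_le_of_neg_log_le {x v : ℝ} (h : -log (1 - x + x ^ 2 / 2) ≤ v) :
    exp (-v) ≤ 1 - x + x ^ 2 / 2 := by
  have hpos : 0 < 1 - x + x ^ 2 / 2 := by nlinarith [sq_nonneg (x - 1)]
  calc exp (-v) ≤ exp (log (1 - x + x ^ 2 / 2)) := exp_le_exp.2 (by linarith)
    _ = 1 - x + x ^ 2 / 2 := exp_log hpos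

lemma integrable_one_sub_mul_add_mul_sq {W : Ω → ℝ} [IsFiniteMeasure μ] (hW : Integrable W μ)
    (hW2 : Integrable (fun ω => W ω ^ 2) μ) (α : ℝ) :
    Integrable (fun ω => 1 - α * W ω + α ^ 2 / 2 * W ω ^ 2) μ :=
  ((integrable_const 1).sub (hW.const_mul α)).add (hW2.const_mul (α ^ 2 / 2))

lemma integrable_exp_neg_catoni [IsFiniteMeasure μ] (hψ_mono : Monotone ψ)
    (hψ_lb : ∀ x, -log (1 - x + x ^ 2 / 2) ≤ ψ x) {W : Ω → ℝ} (hW : Integrable W μ)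
    (hW2 : Integrable (fun ω => W ω ^ 2) μ) (α : ℝ) :
    Integrable (fun ω => exp (-ψ (α * W ω))) μ := by
  have hmeas := hψ_mono.measurable.comp_aemeasurable (hW.aemeasurable.const_mul α)
  refine (integrable_one_sub_mul_add_mul_sq hW hW2 α).mono'
    hmeas.neg.exp.aestronglyMeasurable (ae_of_all _ fun ω => ?_)
  rw [Real.norm_of_nonneg (exp_pos _).le]
  exact (exp_neg_le_of_neg_log_le (hψ_lb _)).trans_eq (by ring)

lemma mgf_catoni_le [IsProbabilityMeasure μ] (hψ_mono : Monotone ψ)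
    (hψ_lb : ∀ x, -log (1 - x + x ^ 2 / 2) ≤ ψ x) {W : Ω → ℝ} (hW : Integrable W μ)
    (hW2 : Integrable (fun ω => W ω ^ 2) μ) (α : ℝ) :
    mgf (fun ω => ψ (α * W ω)) μ (-1)
      ≤ exp (-(α * μ[W]) + α ^ 2 / 2 * μ[fun ω => W ω ^ 2]) :=
  calc mgf (fun ω => ψ (α * W ω)) μ (-1) = ∫ ω, exp (-ψ (α * W ω)) ∂μ := by
        simp only [mgf, neg_one_mul]
    _ ≤ ∫ ω, (1 - α * W ω + α ^ 2 / 2 * W ω ^ 2) ∂μ :=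
        integral_mono (integrable_exp_neg_catoni hψ_mono hψ_lb hW hW2 α)
          (integrable_one_sub_mul_add_mul_sq hW hW2 α)
          fun ω => (exp_neg_le_of_neg_log_le (hψ_lb _)).trans_eq (by ring)
    _ = 1 - α * μ[W] + α ^ 2 / 2 * μ[fun ω => W ω ^ 2] := by
        have hlin : Integrable (fun ω => 1 - α * W ω) μ := (integrable_const 1).sub (hW.const_mul α)
        rw [integral_add hlin (hW2.const_mul _), integral_sub (integrable_const 1) (hW.const_mul α),
          integral_const_mul, integral_const_mul, integral_const, probReal_univ, one_smul]
    _ ≤ exp (-(α * μ[W]) + α ^ 2 / 2 * μ[fun ω => W ω ^ 2]) := by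
        linarith [add_one_le_exp (-(α * μ[W]) + α ^ 2 / 2 * μ[fun ω => W ω ^ 2])]

theorem measure_sum_catoni_le {ι : Type*} [Fintype ι] [IsProbabilityMeasure μ]
    (hψ_mono : Monotone ψ) (hψ_lb : ∀ x, -log (1 - x + x ^ 2 / 2) ≤ ψ x) {W : ι → Ω → ℝ}
    (hind : iIndepFun W μ) (hWm : ∀ i, Measurable (W i)) (hW : ∀ i, Integrable (W i) μ)
    (hW2 : ∀ i, Integrable (fun ω => W i ω ^ 2) μ) (α t : ℝ) :
    μ {ω | ∑ i, ψ (α * W i ω) ≤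
        α * ∑ i, μ[W i] - α ^ 2 / 2 * ∑ i, μ[fun ω => W i ω ^ 2] - t}
      ≤ ENNReal.ofReal (exp (-t)) := by
  set c := α * ∑ i, μ[W i] - α ^ 2 / 2 * ∑ i, μ[fun ω => W i ω ^ 2] - t
  set V : ι → Ω → ℝ := fun i ω => ψ (α * W i ω)
  have hVm : ∀ i, Measurable (V i) := fun i => hψ_mono.measurable.comp ((hWm i).const_mul α)
  have hVind : iIndepFun V μ :=
    hind.comp (fun _ w => ψ (α * w)) fun _ => hψ_mono.measurable.comp (measurable_const_mul α)
  have hVexp : ∀ i ∈ Finset.univ, Integrable (fun ω => exp (-1 * V i ω)) μ := fun i _ => by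
    simpa only [neg_one_mul] using integrable_exp_neg_catoni hψ_mono hψ_lb (hW i) (hW2 i) α
  have hchernoff := measure_le_le_exp_mul_mgf (X := ∑ i, V i) c (t := -1) (by norm_num)
    (hVind.integrable_exp_mul_sum hVm hVexp)
  rw [hVind.mgf_sum hVm] at hchernoff
  rw [← ofReal_measureReal]
  refine ENNReal.ofReal_le_ofReal ?_
  calc μ.real {ω | ∑ i, V i ω ≤ c} = μ.real {ω | (∑ i, V i) ω ≤ c} := by
        simp only [Finset.sum_apply]
    _ ≤ exp (-(-1) * c) * ∏ i, mgf (V i) μ (-1) := hchernoff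
    _ ≤ exp c * exp (∑ i, (-(α * μ[W i]) + α ^ 2 / 2 * μ[fun ω => W i ω ^ 2])) := by
        rw [neg_neg, one_mul, exp_sum]
        gcongr with i
        · exact fun i _ => mgf_nonneg
        · exact mgf_catoni_le hψ_mono hψ_lb (hW i) (hW2 i) α
    _ = exp (-t) := by
        rw [← exp_add, Finset.sum_add_distrib, Finset.sum_neg_distrib, ← Finset.mul_sum,
          ← Finset.mul_sum]
        congr 1
        ring

end Catoni

lemma ofReal_one_sub_le_measure_compl_biUnion {Ω α : Type*} [MeasurableSpace Ω]
    {μ : Measure Ω} [IsProbabilityMeasure μ] {s : Finset α} {B : α → Set Ω} {N : ℕ} {δ : ℝ}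
    (hδ : 0 ≤ δ) (hs : s.card ≤ N) (hB : ∀ y ∈ s, μ (B y) ≤ ENNReal.ofReal (δ / N)) :
    ENNReal.ofReal (1 - δ) ≤ μ (⋃ y ∈ s, B y)ᶜ := by
  set U := ⋃ y ∈ s, B y
  have hNδ : (N : ℝ) * (δ / N) ≤ δ := by
    rcases N.eq_zero_or_pos with rfl | hN
    · simpa using hδ
    · rw [mul_div_cancel₀ _ (Nat.cast_ne_zero.2 hN.ne')]
  have hU : μ U ≤ ENNReal.ofReal δ :=
    calc μ U ≤ ∑ y ∈ s, μ (B y) := measure_biUnion_finset_le _ _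
      _ ≤ s.card * ENNReal.ofReal (δ / N) := by
        rw [← nsmul_eq_mul]; exact Finset.sum_le_card_nsmul _ _ _ hB
      _ ≤ N * ENNReal.ofReal (δ / N) := by gcongr
      _ = ENNReal.ofReal (N * (δ / N)) := by
        rw [ENNReal.ofReal_mul (Nat.cast_nonneg _), ENNReal.ofReal_natCast]
      _ ≤ ENNReal.ofReal δ := ENNReal.ofReal_le_ofReal hNδ
  have hcompl : 1 ≤ μ U + μ Uᶜ :=
    calc 1 = μ (U ∪ Uᶜ) := by rw [Set.union_compl_self, measure_univ]
      _ ≤ μ U + μ Uᶜ := measure_union_le _ _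
  calc ENNReal.ofReal (1 - δ) = 1 - ENNReal.ofReal δ := by
        rw [ENNReal.ofReal_sub _ hδ, ENNReal.ofReal_one]
    _ ≤ 1 - μ U := tsub_le_tsub_left hU 1
    _ ≤ μ Uᶜ := tsub_le_iff_left.2 hcompl

section LinearQuantileModel

variable {E : Type*} [NormedAddCommGroup E] [InnerProductSpace ℝ E]

noncomputable def linearQuantileLoss (τ : ℝ) (θ : E) (z : E × ℝ) : ℝ :=
  quantileLoss τ (z.2 - ⟪z.1, θ⟫)

/-- With `c = l κ`, a lower envelope of the losses at the points of the ball of radius `κ`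
around `y` (`quantileEnvelope_le`). -/
noncomputable def quantileEnvelope (τ c : ℝ) (y : E) (z : E × ℝ) : ℝ :=
  linearQuantileLoss τ y z - c * ‖z.1‖

variable {τ l κ : ℝ} {θ y : E}

lemma linearQuantileLoss_nonneg (hτ : τ ∈ Set.Icc (0 : ℝ) 1) (θ : E) (z : E × ℝ) :
    0 ≤ linearQuantileLoss τ θ z :=
  quantileLoss_nonneg hτ _

lemma measurable_linearQuantileLoss [MeasurableSpace E] [OpensMeasurableSpace E] (τ : ℝ) (θ : E) :
    Measurable (linearQuantileLoss (E := E) τ θ) :=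
  (continuous_quantileLoss τ).measurable.comp
    (measurable_snd.sub ((continuous_id.inner continuous_const).measurable.comp measurable_fst))

lemma measurable_quantileEnvelope [MeasurableSpace E] [OpensMeasurableSpace E] (τ c : ℝ) (y : E) :
    Measurable (quantileEnvelope τ c y) :=
  (measurable_linearQuantileLoss τ y).sub ((measurable_fst.norm).const_mul c)

lemma abs_linearQuantileLoss_sub_le (hτ : 0 ≤ τ) (hl : 1 + τ ≤ l)
    (hθ : θ ∈ Metric.closedBall y κ) (z : E × ℝ) :
    |linearQuantileLoss τ y z - linearQuantileLoss τ θ z| ≤ l * κ * ‖z.1‖ := by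
  rw [mem_closedBall_iff_norm] at hθ
  have hκ : 0 ≤ κ := (norm_nonneg _).trans hθ
  calc |linearQuantileLoss τ y z - linearQuantileLoss τ θ z|
      ≤ (1 + τ) * |⟪z.1, θ - y⟫| := by
        refine (abs_quantileLoss_sub_le hτ _ _).trans_eq ?_
        rw [sub_sub_sub_cancel_left, ← inner_sub_right]
    _ ≤ l * (‖z.1‖ * κ) := by grw [abs_real_inner_le_norm, hθ, hl]
    _ = l * κ * ‖z.1‖ := by ring

lemma quantileEnvelope_le (hτ : 0 ≤ τ) (hl : 1 + τ ≤ l) (hθ : θ ∈ Metric.closedBall y κ)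
    (z : E × ℝ) :
    quantileEnvelope τ (l * κ) y z ≤ linearQuantileLoss τ θ z := by
  have := (abs_le.1 (abs_linearQuantileLoss_sub_le hτ hl hθ z)).2
  unfold quantileEnvelope
  linarith

lemma linearQuantileLoss_le_quantileEnvelope_add (hτ : 0 ≤ τ) (hl : 1 + τ ≤ l)
    (hθ : θ ∈ Metric.closedBall y κ) (z : E × ℝ) :
    linearQuantileLoss τ θ z ≤ quantileEnvelope τ (l * κ) y z + 2 * (l * κ * ‖z.1‖) := by
  have := (abs_le.1 (abs_linearQuantileLoss_sub_le hτ hl hθ z)).1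
  unfold quantileEnvelope
  linarith

/-- Positive values of the envelope are controlled by the loss at `θ`, negative ones by the shift,
since the loss at `y` is nonnegative. -/
lemma quantileEnvelope_sq_le (hτ : τ ∈ Set.Icc (0 : ℝ) 1) (hl : 1 + τ ≤ l)
    (hθ : θ ∈ Metric.closedBall y κ) (z : E × ℝ) :
    quantileEnvelope τ (l * κ) y z ^ 2 ≤ linearQuantileLoss τ θ z ^ 2 + (l * κ * ‖z.1‖) ^ 2 := by
  have hle := quantileEnvelope_le hτ.1 hl hθ z
  have hy0 := linearQuantileLoss_nonneg hτ y z
  have hshift : 0 ≤ l * κ * ‖z.1‖ :=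
    (abs_nonneg _).trans (abs_linearQuantileLoss_sub_le hτ.1 hl hθ z)
  rcases le_total 0 (quantileEnvelope τ (l * κ) y z) with hW | hW
  · nlinarith
  · have : -(l * κ * ‖z.1‖) ≤ quantileEnvelope τ (l * κ) y z := by
      unfold quantileEnvelope; linarith
    nlinarith

section RandomSample

variable [MeasurableSpace E] [OpensMeasurableSpace E] {Ω : Type*} [MeasurableSpace Ω]
  {μ : Measure Ω} {Z : Ω → E × ℝ}

lemma integrable_quantileEnvelope (hτ : τ ∈ Set.Icc (0 : ℝ) 1) (hl : 1 + τ ≤ l)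
    (hθ : θ ∈ Metric.closedBall y κ) (hZ : Measurable Z)
    (hℓ : Integrable (fun ω => linearQuantileLoss τ θ (Z ω)) μ)
    (hX : Integrable (fun ω => ‖(Z ω).1‖) μ) :
    Integrable (fun ω => quantileEnvelope τ (l * κ) y (Z ω)) μ := by
  refine (hℓ.add (hX.const_mul (2 * (l * κ)))).mono'
    ((measurable_quantileEnvelope τ _ y).comp hZ).aestronglyMeasurable (ae_of_all _ fun ω => ?_)
  have hle := quantileEnvelope_le hτ.1 hl hθ (Z ω)
  have hge := linearQuantileLoss_le_quantileEnvelope_add hτ.1 hl hθ (Z ω)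
  have hθ0 := linearQuantileLoss_nonneg hτ θ (Z ω)
  rw [Pi.add_apply, Real.norm_eq_abs, abs_le]
  constructor <;> linarith

lemma integrable_quantileEnvelope_sq (hτ : τ ∈ Set.Icc (0 : ℝ) 1) (hl : 1 + τ ≤ l)
    (hθ : θ ∈ Metric.closedBall y κ) (hZ : Measurable Z)
    (hℓ : Integrable (fun ω => linearQuantileLoss τ θ (Z ω) ^ 2) μ)
    (hX : Integrable (fun ω => ‖(Z ω).1‖ ^ 2) μ) :
    Integrable (fun ω => quantileEnvelope τ (l * κ) y (Z ω) ^ 2) μ := by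
  refine (hℓ.add (hX.const_mul ((l * κ) ^ 2))).mono'
    (((measurable_quantileEnvelope τ _ y).comp hZ).pow_const 2).aestronglyMeasurable
    (ae_of_all _ fun ω => ?_)
  rw [Pi.add_apply, Real.norm_of_nonneg (sq_nonneg _)]
  exact (quantileEnvelope_sq_le hτ hl hθ (Z ω)).trans_eq (by ring)

variable {n : ℕ} {Z : Fin n → Ω → E × ℝ}

lemma sum_integral_linearQuantileLoss_le (hτ : τ ∈ Set.Icc (0 : ℝ) 1) (hl : 1 + τ ≤ l)
    (hθ : θ ∈ Metric.closedBall y κ) (hZ : ∀ i, Measurable (Z i))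
    (hℓ : ∀ i, Integrable (fun ω => linearQuantileLoss τ θ (Z i ω)) μ)
    (hX : ∀ i, Integrable (fun ω => ‖(Z i ω).1‖) μ) {A : ℝ} (hA : ∀ i, ∫ ω, ‖(Z i ω).1‖ ∂μ = A) :
    ∑ i, ∫ ω, linearQuantileLoss τ θ (Z i ω) ∂μ
      ≤ ∑ i, ∫ ω, quantileEnvelope τ (l * κ) y (Z i ω) ∂μ + n * (2 * (l * κ) * A) := by
  have hi : ∀ i, ∫ ω, linearQuantileLoss τ θ (Z i ω) ∂μ
      ≤ ∫ ω, quantileEnvelope τ (l * κ) y (Z i ω) ∂μ + 2 * (l * κ) * A := fun i => by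
    have hW := integrable_quantileEnvelope hτ hl hθ (hZ i) (hℓ i) (hX i)
    rw [← hA i, ← integral_const_mul, ← integral_add hW ((hX i).const_mul _)]
    exact integral_mono (hℓ i) (hW.add ((hX i).const_mul _)) fun ω =>
      (linearQuantileLoss_le_quantileEnvelope_add hτ.1 hl hθ (Z i ω)).trans_eq (by ring)
  refine (Finset.sum_le_sum fun i _ => hi i).trans_eq ?_
  rw [Finset.sum_add_distrib, Finset.sum_const, Finset.card_univ, Fintype.card_fin, nsmul_eq_mul]

lemma sum_integral_quantileEnvelope_sq_le (hτ : τ ∈ Set.Icc (0 : ℝ) 1) (hl : 1 + τ ≤ l)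
    (hθ : θ ∈ Metric.closedBall y κ) (hZ : ∀ i, Measurable (Z i))
    (hℓ : ∀ i, Integrable (fun ω => linearQuantileLoss τ θ (Z i ω) ^ 2) μ)
    (hX : ∀ i, Integrable (fun ω => ‖(Z i ω).1‖ ^ 2) μ) {A : ℝ}
    (hA : ∀ i, ∫ ω, ‖(Z i ω).1‖ ^ 2 ∂μ = A) :
    ∑ i, ∫ ω, quantileEnvelope τ (l * κ) y (Z i ω) ^ 2 ∂μ
      ≤ ∑ i, ∫ ω, linearQuantileLoss τ θ (Z i ω) ^ 2 ∂μ + n * ((l * κ) ^ 2 * A) := by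
  have hi : ∀ i, ∫ ω, quantileEnvelope τ (l * κ) y (Z i ω) ^ 2 ∂μ
      ≤ ∫ ω, linearQuantileLoss τ θ (Z i ω) ^ 2 ∂μ + (l * κ) ^ 2 * A := fun i => by
    rw [← hA i, ← integral_const_mul, ← integral_add (hℓ i) ((hX i).const_mul _)]
    exact integral_mono (integrable_quantileEnvelope_sq hτ hl hθ (hZ i) (hℓ i) (hX i))
      ((hℓ i).add ((hX i).const_mul _)) fun ω =>
      (quantileEnvelope_sq_le hτ hl hθ (Z i ω)).trans_eq (by ring)
  refine (Finset.sum_le_sum fun i _ => hi i).trans_eq ?_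
  rw [Finset.sum_add_distrib, Finset.sum_const, Finset.card_univ, Fintype.card_fin, nsmul_eq_mul]

lemma measure_sum_catoni_quantileEnvelope_le [IsProbabilityMeasure μ] {ψ : ℝ → ℝ}
    (hψ_mono : Monotone ψ) (hψ_lb : ∀ x, -log (1 - x + x ^ 2 / 2) ≤ ψ x)
    (hτ : τ ∈ Set.Icc (0 : ℝ) 1) (hl : 1 + τ ≤ l) (hθ : θ ∈ Metric.closedBall y κ)
    (hind : iIndepFun Z μ) (hZ : ∀ i, Measurable (Z i))
    (hℓ : ∀ i, Integrable (fun ω => linearQuantileLoss τ θ (Z i ω)) μ)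
    (hℓ2 : ∀ i, Integrable (fun ω => linearQuantileLoss τ θ (Z i ω) ^ 2) μ)
    (hX : ∀ i, Integrable (fun ω => ‖(Z i ω).1‖) μ)
    (hX2 : ∀ i, Integrable (fun ω => ‖(Z i ω).1‖ ^ 2) μ) (α t : ℝ) :
    μ {ω | ∑ i, ψ (α * quantileEnvelope τ (l * κ) y (Z i ω)) ≤
        α * ∑ i, ∫ ω, quantileEnvelope τ (l * κ) y (Z i ω) ∂μ
          - α ^ 2 / 2 * ∑ i, ∫ ω, quantileEnvelope τ (l * κ) y (Z i ω) ^ 2 ∂μ - t}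
      ≤ ENNReal.ofReal (exp (-t)) :=
  measure_sum_catoni_le hψ_mono hψ_lb
    (hind.comp _ fun _ => measurable_quantileEnvelope τ (l * κ) y)
    (fun i => (measurable_quantileEnvelope τ (l * κ) y).comp (hZ i))
    (fun i => integrable_quantileEnvelope hτ hl hθ (hZ i) (hℓ i) (hX i))
    (fun i => integrable_quantileEnvelope_sq hτ hl hθ (hZ i) (hℓ2 i) (hX2 i)) α t

theorem risk_sub_catoni_le_of_envelope (hn : 0 < n) {α : ℝ} (hα : 0 < α) {ψ : ℝ → ℝ}
    (hψ_mono : Monotone ψ) (hτ : τ ∈ Set.Icc (0 : ℝ) 1) (hl : 1 + τ ≤ l)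
    (hθ : θ ∈ Metric.closedBall y κ) (hZ : ∀ i, Measurable (Z i))
    (hℓ : ∀ i, Integrable (fun ω => linearQuantileLoss τ θ (Z i ω)) μ)
    (hℓ2 : ∀ i, Integrable (fun ω => linearQuantileLoss τ θ (Z i ω) ^ 2) μ)
    (hX : ∀ i, Integrable (fun ω => ‖(Z i ω).1‖) μ)
    (hX2 : ∀ i, Integrable (fun ω => ‖(Z i ω).1‖ ^ 2) μ)
    {A A₂ S L : ℝ} (hA : ∀ i, ∫ ω, ‖(Z i ω).1‖ ∂μ = A)
    (hA₂ : ∀ i, ∫ ω, ‖(Z i ω).1‖ ^ 2 ∂μ = A₂)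
    (hS : (1 / (n : ℝ)) * ∑ i, ∫ ω, linearQuantileLoss τ θ (Z i ω) ^ 2 ∂μ ≤ S) {ω : Ω}
    (hω : α * ∑ i, ∫ ω, quantileEnvelope τ (l * κ) y (Z i ω) ∂μ
        - α ^ 2 / 2 * ∑ i, ∫ ω, quantileEnvelope τ (l * κ) y (Z i ω) ^ 2 ∂μ - L
        < ∑ i, ψ (α * quantileEnvelope τ (l * κ) y (Z i ω))) :
    (1 / (n : ℝ)) * ∑ i, ∫ ω, linearQuantileLoss τ θ (Z i ω) ∂μ
        - (1 / (n * α)) * ∑ i, ψ (α * linearQuantileLoss τ θ (Z i ω))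
      ≤ 2 * κ * l * A + α * S + α * (κ * l) ^ 2 * A₂ + (1 / (n * α)) * L := by
  set P := ∑ i, ∫ ω, linearQuantileLoss τ θ (Z i ω) ∂μ
  set Q := ∑ i, ∫ ω, linearQuantileLoss τ θ (Z i ω) ^ 2 ∂μ
  set m₁ := ∑ i, ∫ ω, quantileEnvelope τ (l * κ) y (Z i ω) ∂μ
  set m₂ := ∑ i, ∫ ω, quantileEnvelope τ (l * κ) y (Z i ω) ^ 2 ∂μ
  have hn' : (0 : ℝ) < n := Nat.cast_pos.2 hn
  have hP : α * P ≤ α * (m₁ + n * (2 * (l * κ) * A)) :=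
    mul_le_mul_of_nonneg_left (sum_integral_linearQuantileLoss_le hτ hl hθ hZ hℓ hX hA) hα.le
  have hm₂ : α ^ 2 / 2 * m₂ ≤ α ^ 2 / 2 * (Q + n * ((l * κ) ^ 2 * A₂)) :=
    mul_le_mul_of_nonneg_left (sum_integral_quantileEnvelope_sq_le hτ hl hθ hZ hℓ2 hX2 hA₂)
      (by positivity)
  have hψ : ∑ i, ψ (α * quantileEnvelope τ (l * κ) y (Z i ω))
      ≤ ∑ i, ψ (α * linearQuantileLoss τ θ (Z i ω)) :=
    Finset.sum_le_sum fun i _ => hψ_mono (by gcongr; exact quantileEnvelope_le hτ.1 hl hθ _)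
  have hQ : Q ≤ n * S := by rwa [one_div, inv_mul_le_iff₀ hn'] at hS
  have hQ₀ : 0 ≤ Q := Finset.sum_nonneg fun i _ => integral_nonneg fun ω => sq_nonneg _
  have hA₂₀ : 0 ≤ A₂ := hA₂ ⟨0, hn⟩ ▸ integral_nonneg fun ω => sq_nonneg _
  have key : α * P - ∑ i, ψ (α * linearQuantileLoss τ θ (Z i ω))
      ≤ n * α * (2 * κ * l * A + α * S + α * (κ * l) ^ 2 * A₂) + L := by
    nlinarith [mul_nonneg (mul_nonneg hn'.le (sq_nonneg α)) hA₂₀, mul_nonneg (sq_nonneg α) hQ₀]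
  have hnα : (0 : ℝ) < n * α := mul_pos hn' hα
  calc (1 / (n : ℝ)) * P - (1 / (n * α)) * ∑ i, ψ (α * linearQuantileLoss τ θ (Z i ω))
      = (α * P - ∑ i, ψ (α * linearQuantileLoss τ θ (Z i ω))) / (n * α) := by
        field_simp
    _ ≤ (n * α * (2 * κ * l * A + α * S + α * (κ * l) ^ 2 * A₂) + L) / (n * α) := by
        gcongr
    _ = 2 * κ * l * A + α * S + α * (κ * l) ^ 2 * A₂ + (1 / (n * α)) * L := by
        field_simp

end RandomSample

end LinearQuantileModel

theorem heterogeneous_quantile_generalization_bound_general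
    {Ω : Type*} [MeasurableSpace Ω] (μ : Measure Ω) [IsProbabilityMeasure μ]
    (p n : ℕ) (hn : 0 < n)
    (τ : ℝ) (hτ : τ ∈ Set.Ioo (0 : ℝ) 1)
    -- i.i.d. inputs with generic copy `X0`, heterogeneous independent noises
    (Xi : Fin n → Ω → EuclideanSpace ℝ (Fin p)) (Yi : Fin n → Ω → ℝ)
    (X0 : Ω → EuclideanSpace ℝ (Fin p))
    (hXmeas : ∀ i, Measurable (Xi i)) (hYmeas : ∀ i, Measurable (Yi i))
    (hX0meas : Measurable X0)
    (hXident : ∀ i, Measure.map (Xi i) μ = Measure.map X0 μ)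
    (hindep : iIndepFun (fun i ω => (Xi i ω, Yi i ω)) μ)
    -- the hypothesis space, (C.0)
    (Θ : Set (EuclideanSpace ℝ (Fin p)))
    -- the sample risk and the true parameter
    (Rn : EuclideanSpace ℝ (Fin p) → ℝ)
    (hRn : ∀ θ, Rn θ = (1 / (n : ℝ)) * ∑ i, ∫ ω, quantileLoss τ (Yi i ω - ⟪Xi i ω, θ⟫) ∂μ)
    (hRn_int : ∀ θ ∈ Θ, ∀ i, Integrable (fun ω => quantileLoss τ (Yi i ω - ⟪Xi i ω, θ⟫)) μ)
    -- the variance factor `σ_R²(n)` and moment conditions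
    (hsq_int : ∀ θ ∈ Θ, ∀ i,
        Integrable (fun ω => quantileLoss τ (Yi i ω - ⟪Xi i ω, θ⟫) ^ 2) μ)
    (hbdd : BddAbove ((fun θ => (1 / (n : ℝ)) *
        ∑ i, ∫ ω, quantileLoss τ (Yi i ω - ⟪Xi i ω, θ⟫) ^ 2 ∂μ) '' Θ))
    (hX_int : Integrable (fun ω => ‖X0 ω‖) μ)
    (hX_sq_int : Integrable (fun ω => ‖X0 ω‖ ^ 2) μ)
    -- Catoni's truncation function
    (ψ : ℝ → ℝ) (hψ_mono : Monotone ψ)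
    (hψ_lb : ∀ x : ℝ, -Real.log (1 - x + x ^ 2 / 2) ≤ ψ x)
    (δ κ α : ℝ) (hδ : δ ∈ Set.Ioo (0 : ℝ) 1) (hα : 0 < α)
    (N : ℕ) (hN : IsCoveringNumber Θ κ N)
    -- the log-truncated quantile estimator
    (θhat : Ω → EuclideanSpace ℝ (Fin p))
    (hθhat_mem : ∀ ω, θhat ω ∈ Θ) :
    μ {ω | Rn (θhat ω)
          - (1 / (n * α)) * ∑ i, ψ (α * quantileLoss τ (Yi i ω - ⟪Xi i ω, θhat ω⟫)) ≤
        2 * κ * max (1 + τ) (2 - τ) * (∫ ω', ‖X0 ω'‖ ∂μ)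
        + α * sSup ((fun θ => (1 / (n : ℝ)) *
            ∑ i, ∫ ω', quantileLoss τ (Yi i ω' - ⟪Xi i ω', θ⟫) ^ 2 ∂μ) '' Θ)
        + α * (κ * max (1 + τ) (2 - τ)) ^ 2 * (∫ ω', ‖X0 ω'‖ ^ 2 ∂μ)
        + (1 / (n * α)) * Real.log (N / δ)}
      ≥ ENNReal.ofReal (1 - δ) := by
  classical
  have hτ' : τ ∈ Set.Icc (0 : ℝ) 1 := Set.Ioo_subset_Icc_self hτ
  set l := max (1 + τ) (2 - τ)
  have hl : 1 + τ ≤ l := le_max_left _ _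
  set Z : Fin n → Ω → EuclideanSpace ℝ (Fin p) × ℝ := fun i ω => (Xi i ω, Yi i ω)
  have hZ : ∀ i, Measurable (Z i) := fun i => (hXmeas i).prodMk (hYmeas i)
  have hident : ∀ i, IdentDistrib (Xi i) X0 μ μ := fun i =>
    ⟨(hXmeas i).aemeasurable, hX0meas.aemeasurable, hXident i⟩
  have hX := fun i => ((hident i).comp measurable_norm).integrable_iff.2 hX_int
  have hX₂ := fun i => ((hident i).comp (measurable_norm.pow_const 2)).integrable_iff.2 hX_sq_int
  have hA := fun i => ((hident i).comp measurable_norm).integral_eq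
  have hA₂ := fun i => ((hident i).comp (measurable_norm.pow_const 2)).integral_eq
  obtain ⟨⟨s, hcard, hcover⟩, -⟩ := hN
  set net := s.filter fun y => (Θ ∩ Metric.closedBall y κ).Nonempty
  have hnet : net.card ≤ N := (Finset.card_filter_le _ _).trans hcard.le
  set bad := fun y => {ω | ∑ i, ψ (α * quantileEnvelope τ (l * κ) y (Z i ω)) ≤
    α * ∑ i, ∫ ω, quantileEnvelope τ (l * κ) y (Z i ω) ∂μ
      - α ^ 2 / 2 * ∑ i, ∫ ω, quantileEnvelope τ (l * κ) y (Z i ω) ^ 2 ∂μ - log (N / δ)}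
  have hbad : ∀ y ∈ net, μ (bad y) ≤ ENNReal.ofReal (δ / N) := by
    intro y hy
    obtain ⟨θ, hθΘ, hθ⟩ := (Finset.mem_filter.1 hy).2
    have hN : (0 : ℝ) < N := Nat.cast_pos.2 ((Finset.card_pos.2 ⟨y, hy⟩).trans_le hnet)
    have := measure_sum_catoni_quantileEnvelope_le hψ_mono hψ_lb hτ' hl hθ hindep hZ
      (hRn_int θ hθΘ) (hsq_int θ hθΘ) hX hX₂ α (log (N / δ))
    rwa [exp_neg, exp_log (div_pos hN hδ.1), inv_div] at this
  refine ge_iff_le.2 ((ofReal_one_sub_le_measure_compl_biUnion hδ.1.le hnet hbad).trans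
    (measure_mono fun ω hω => ?_))
  obtain ⟨y, hy, hθ⟩ : ∃ y ∈ s, θhat ω ∈ Metric.closedBall y κ := by
    simpa using hcover (hθhat_mem ω)
  have hgood : ω ∉ bad y := fun h =>
    hω (Set.mem_biUnion (Finset.mem_filter.2 ⟨hy, θhat ω, hθhat_mem ω, hθ⟩) h)
  rw [Set.mem_ofPred_eq, hRn]
  exact risk_sub_catoni_le_of_envelope hn hα hψ_mono hτ' hl hθ hZ (hRn_int _ (hθhat_mem ω))
    (hsq_int _ (hθhat_mem ω)) hX hX₂ hA hA₂ (le_csSup hbdd ⟨_, hθhat_mem ω, rfl⟩)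
    (not_le.1 hgood)

/-- **Lemma A.6 (generalization error bound for heterogeneous quantile regression).** For
any `κ > 0`, under (C.0), finiteness of the variance factor `σ_R²(n)` and `E‖X‖₂² < ∞`,
with probability at least `1 − δ` the sample risk of the log-truncated quantile estimator
exceeds its truncated empirical risk by at most the displayed quantity. -/
theorem heterogeneous_quantile_generalization_bound
    {Ω : Type*} [MeasurableSpace Ω] (μ : Measure Ω) [IsProbabilityMeasure μ]
    (p n : ℕ) (hn : 0 < n)
    (τ : ℝ) (hτ : τ ∈ Set.Ioo (0 : ℝ) 1)
    -- i.i.d. inputs with generic copy `X0`, heterogeneous independent noises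
    (Xi : Fin n → Ω → EuclideanSpace ℝ (Fin p)) (Yi : Fin n → Ω → ℝ)
    (X0 : Ω → EuclideanSpace ℝ (Fin p))
    (εi : Fin n → Ω → ℝ)
    (hXmeas : ∀ i, Measurable (Xi i)) (hYmeas : ∀ i, Measurable (Yi i))
    (hX0meas : Measurable X0) (hεmeas : ∀ i, Measurable (εi i))
    (hXident : ∀ i, Measure.map (Xi i) μ = Measure.map X0 μ)
    (hindep : iIndepFun (fun i ω => (Xi i ω, Yi i ω)) μ)
    -- the hypothesis space, (C.0)
    (Θ : Set (EuclideanSpace ℝ (Fin p))) (hΘne : Θ.Nonempty)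
    (r : ℝ) (hr : 0 < r)
    (hC0conv : Convex ℝ Θ) (hC0bdd : ∀ θ ∈ Θ, ‖θ‖ ≤ r)
    -- the linear quantile model `Y_i = X_i⊤θ*_n + ε_i` with `P(ε_i < 0 | X_i) = τ`
    (θstarn : EuclideanSpace ℝ (Fin p)) (hθstarn_mem : θstarn ∈ Θ)
    (hmodel : ∀ i ω, Yi i ω = (⟪Xi i ω, θstarn⟫ : ℝ) + εi i ω)
    (hquantile : ∀ i,
      μ[Set.indicator {ω | εi i ω < 0} (fun _ => (1 : ℝ))
          | MeasurableSpace.comap (Xi i) inferInstance] =ᵐ[μ] fun _ => τ)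
    -- the sample risk and the true parameter
    (Rn : EuclideanSpace ℝ (Fin p) → ℝ)
    (hRn : ∀ θ, Rn θ = (1 / (n : ℝ)) * ∑ i, ∫ ω, quantileLoss τ (Yi i ω - ⟪Xi i ω, θ⟫) ∂μ)
    (hRn_int : ∀ θ ∈ Θ, ∀ i, Integrable (fun ω => quantileLoss τ (Yi i ω - ⟪Xi i ω, θ⟫)) μ)
    -- the variance factor `σ_R²(n)` and moment conditions
    (hsq_int : ∀ θ ∈ Θ, ∀ i,
        Integrable (fun ω => quantileLoss τ (Yi i ω - ⟪Xi i ω, θ⟫) ^ 2) μ)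
    (hbdd : BddAbove ((fun θ => (1 / (n : ℝ)) *
        ∑ i, ∫ ω, quantileLoss τ (Yi i ω - ⟪Xi i ω, θ⟫) ^ 2 ∂μ) '' Θ))
    (hX_int : Integrable (fun ω => ‖X0 ω‖) μ)
    (hX_sq_int : Integrable (fun ω => ‖X0 ω‖ ^ 2) μ)
    -- Catoni's truncation function
    (ψ : ℝ → ℝ) (hψ_cont : Continuous ψ) (hψ_mono : Monotone ψ)
    (hψ_lb : ∀ x : ℝ, -Real.log (1 - x + x ^ 2 / 2) ≤ ψ x)
    (hψ_ub : ∀ x : ℝ, ψ x ≤ Real.log (1 + x + x ^ 2 / 2))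
    (δ κ α : ℝ) (hδ : δ ∈ Set.Ioo (0 : ℝ) 1) (hκ : 0 < κ) (hα : 0 < α)
    (N : ℕ) (hN : IsCoveringNumber Θ κ N)
    -- the log-truncated quantile estimator
    (θhat : Ω → EuclideanSpace ℝ (Fin p))
    (hθhat_mem : ∀ ω, θhat ω ∈ Θ)
    (hθhat_min : ∀ ω, ∀ θ ∈ Θ,
      (1 / (n * α)) * ∑ i, ψ (α * quantileLoss τ (Yi i ω - ⟪Xi i ω, θhat ω⟫))
        ≤ (1 / (n * α)) * ∑ i, ψ (α * quantileLoss τ (Yi i ω - ⟪Xi i ω, θ⟫))) :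
    μ {ω | Rn (θhat ω)
          - (1 / (n * α)) * ∑ i, ψ (α * quantileLoss τ (Yi i ω - ⟪Xi i ω, θhat ω⟫)) ≤
        2 * κ * max (1 + τ) (2 - τ) * (∫ ω', ‖X0 ω'‖ ∂μ)
        + α * sSup ((fun θ => (1 / (n : ℝ)) *
            ∑ i, ∫ ω', quantileLoss τ (Yi i ω' - ⟪Xi i ω', θ⟫) ^ 2 ∂μ) '' Θ)
        + α * (κ * max (1 + τ) (2 - τ)) ^ 2 * (∫ ω', ‖X0 ω'‖ ^ 2 ∂μ)
        + (1 / (n * α)) * Real.log (N / δ)}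
      ≥ ENNReal.ofReal (1 - δ) :=
  heterogeneous_quantile_generalization_bound_general μ p n hn τ hτ Xi Yi X0 hXmeas hYmeas hX0meas
    hXident hindep Θ Rn hRn hRn_int hsq_int hbdd hX_int hX_sq_int ψ hψ_mono hψ_lb δ κ α hδ hα N hN
    θhat hθhat_mem
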